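/- arXiv:1208.0218 — 2 statements merged into one kernel-verified Lean document; each statement's English description precedes it below -/
import Mathlib

section
/- Let n be a positive natural number, let x be a nonzero vector in ℝⁿ, let α > 0, and let R be an n×n real matrix all of whose entries lie in the interval [-1, 1]. Then the rotation transformation increment α · (1/(n·‖x‖₂)) · R·x has Euclidean norm at most α; that is, the rotation transformation moves the point x within a closed ball (hypersphere) of radius α centered at x. -/
/-!
Applying Cauchy–Schwarz to each row bounds `‖R x‖` by the Frobenius norm of `R` times `‖x‖`,
and entries in `[-1, 1]` make that Frobenius norm at most `n`; the factor `1 / (n ‖x‖)` cancels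
the resulting bound `n ‖x‖`.
-/

open Finset

namespace Matrix

variable {m n : Type*} [Fintype m] [Fintype n]

theorem norm_sq_toLp_mulVec_le (A : Matrix m n ℝ) (x : EuclideanSpace ℝ n) :
    ‖(WithLp.toLp 2 (A *ᵥ x) : EuclideanSpace ℝ m)‖ ^ 2 ≤ (∑ i, ∑ j, A i j ^ 2) * ‖x‖ ^ 2 := by
  rw [EuclideanSpace.real_norm_sq_eq, EuclideanSpace.real_norm_sq_eq, sum_mul]
  exact sum_le_sum fun i _ ↦ sum_mul_sq_le_sq_mul_sq univ (A i) x

theorem sum_sum_sq_le_of_abs_le (A : Matrix m n ℝ) {c : ℝ} (hA : ∀ i j, |A i j| ≤ c) :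
    ∑ i, ∑ j, A i j ^ 2 ≤ Fintype.card m * Fintype.card n * c ^ 2 := by
  calc ∑ i, ∑ j, A i j ^ 2 ≤ ∑ _i : m, ∑ _j : n, c ^ 2 :=
        sum_le_sum fun i _ ↦ sum_le_sum fun j _ ↦
          sq_le_sq' (abs_le.mp (hA i j)).1 (abs_le.mp (hA i j)).2
    _ = Fintype.card m * Fintype.card n * c ^ 2 := by simp [mul_assoc]

theorem norm_toLp_mulVec_le_of_abs_le (A : Matrix m n ℝ) {c : ℝ} (hc : 0 ≤ c)
    (hA : ∀ i j, |A i j| ≤ c) (x : EuclideanSpace ℝ n) :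
    ‖(WithLp.toLp 2 (A *ᵥ x) : EuclideanSpace ℝ m)‖ ≤
      c * √(Fintype.card m * Fintype.card n) * ‖x‖ := by
  rw [← pow_le_pow_iff_left₀ (norm_nonneg _) (by positivity) two_ne_zero]
  calc _ ≤ (∑ i, ∑ j, A i j ^ 2) * ‖x‖ ^ 2 := norm_sq_toLp_mulVec_le A x
    _ ≤ Fintype.card m * Fintype.card n * c ^ 2 * ‖x‖ ^ 2 := by
        gcongr
        exact sum_sum_sq_le_of_abs_le A hA
    _ = (c * √(Fintype.card m * Fintype.card n) * ‖x‖) ^ 2 := by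
        rw [mul_pow, mul_pow, Real.sq_sqrt (by positivity)]
        ring

end Matrix

theorem rotation_transformation_norm_bound_general
    (n : ℕ)
    (x : EuclideanSpace ℝ (Fin n))
    (α : ℝ) (hα : 0 < α)
    (R : Matrix (Fin n) (Fin n) ℝ)
    (hR : ∀ i j, R i j ∈ Set.Icc (-1 : ℝ) 1) :
    ‖(α * (1 / (n * ‖x‖))) • (show EuclideanSpace ℝ (Fin n) from WithLp.toLp 2 (R.mulVec x))‖ ≤ α := by
  have hRx : ‖(WithLp.toLp 2 (R.mulVec x) : EuclideanSpace ℝ (Fin n))‖ ≤ n * ‖x‖ := by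
    simpa [← sq, Real.sqrt_sq] using
      R.norm_toLp_mulVec_le_of_abs_le zero_le_one (fun i j ↦ abs_le.mpr (hR i j)) x
  rw [norm_smul, Real.norm_of_nonneg (by positivity), mul_one_div, div_mul_eq_mul_div,
    mul_div_assoc]
  exact mul_le_of_le_one_right hα.le (div_le_one_of_le₀ hRx (by positivity))

theorem rotation_transformation_norm_bound
    (n : ℕ) (hn : 0 < n)
    (x : EuclideanSpace ℝ (Fin n)) (hx : x ≠ 0)
    (α : ℝ) (hα : 0 < α)
    (R : Matrix (Fin n) (Fin n) ℝ)
    (hR : ∀ i j, R i j ∈ Set.Icc (-1 : ℝ) 1) :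
    ‖(α * (1 / (n * ‖x‖))) • (show EuclideanSpace ℝ (Fin n) from WithLp.toLp 2 (R.mulVec x))‖ ≤ α :=
  rotation_transformation_norm_bound_general n x α hα R hR
end

section
/- Define g₄ : ℝ × ℝ → ℝ by g₄(x, y) = (y − (5.1/(4π²))x² + (5/π)x − 6)² + 10(1 − 1/(8π))·cos(x) + 10. Then the global minimum of g₄ over [−5, 10] × [0, 15] is 5/(4π) (≈ 0.3979), attained in particular at x = π and y = 5.1/4 + 1; that is, g₄(π, 5.1/4 + 1) = 5/(4π) and g₄(x, y) ≥ 5/(4π) for all x ∈ [−5, 10] and y ∈ [0, 15]. -/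
/-! The square is nonnegative and the cosine term has a nonnegative coefficient, so
`g₄ ≥ 10 - 10 (1 - 1/(8π)) = 5/(4π)` everywhere; at `x = π`, `y = 5.1/4 + 1` the square
vanishes and `cos π = -1`, so the bound is attained. -/

noncomputable def g₄ (x y : ℝ) : ℝ :=
  (y - (5.1 / (4 * Real.pi ^ 2)) * x ^ 2 + (5 / Real.pi) * x - 6) ^ 2
    + 10 * (1 - 1 / (8 * Real.pi)) * Real.cos x + 10

open Real

lemma ten_sub_branin_cos_coeff : 10 - 10 * (1 - 1 / (8 * π)) = 5 / (4 * π) := by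
  field_simp
  ring

lemma branin_cos_coeff_nonneg : 0 ≤ 10 * (1 - 1 / (8 * π)) := by
  have h : 1 / (8 * π) ≤ 1 := by
    rw [div_le_one (by positivity)]
    linarith [pi_gt_three]
  linarith

lemma g₄_pi : g₄ π (5.1 / 4 + 1) = 5 / (4 * π) := by
  have hsquare : 5.1 / 4 + 1 - 5.1 / (4 * π ^ 2) * π ^ 2 + 5 / π * π - 6 = 0 := by
    field_simp
    ring
  rw [g₄, hsquare, cos_pi, ← ten_sub_branin_cos_coeff]
  ring

lemma le_g₄ (x y : ℝ) : 5 / (4 * π) ≤ g₄ x y := by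
  have hcos : 0 ≤ 10 * (1 - 1 / (8 * π)) * (cos x + 1) :=
    mul_nonneg branin_cos_coeff_nonneg (by linarith [neg_one_le_cos x])
  rw [g₄, ← ten_sub_branin_cos_coeff]
  linarith [sq_nonneg (y - 5.1 / (4 * π ^ 2) * x ^ 2 + 5 / π * x - 6)]

theorem g₄_global_min :
    g₄ Real.pi (5.1 / 4 + 1) = 5 / (4 * Real.pi) ∧
      ∀ x y : ℝ, x ∈ Set.Icc (-5 : ℝ) 10 → y ∈ Set.Icc (0 : ℝ) 15 →
        g₄ x y ≥ 5 / (4 * Real.pi) :=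
  ⟨g₄_pi, fun x y _ _ => le_g₄ x y⟩
end
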